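/- arXiv:2504.20641 — 2 statements merged into one kernel-verified Lean document; each statement's English description precedes it below -/
import Mathlib

section
/- Let A be a unital Banach algebra, a ∈ A, and γ : ℝ → A a continuously differentiable map. Then t ↦ exp(−γ(t)) is differentiable, and for every t ∈ ℝ: exp(γ(t))·a·exp(−γ(t)) + exp(γ(t))·(d/dt)[exp(−γ(t))] = Σ_{n≥0} (ad_{γ(t)})ⁿ(a)/n! − Σ_{n≥0} (ad_{γ(t)})ⁿ(γ′(t))/(n+1)!, where ad_c(x) := c·x − x·c and both series converge absolutely in norm. -/
/-!
Let `L_x` and `R_x` be left and right multiplication by `x`; they commute, and `ad x = L_x - R_x`.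
Conjugation by `exp x` is `L_{exp x} R_{exp (-x)} = exp (L_x) exp (R_{-x}) = exp (ad x)`.
Differentiating the exponential series termwise, the derivative of `exp` at `y` is the divided
difference `(exp R_y - exp L_y) / (R_y - L_y)` of the commuting operators `L_y`, `R_y`, and a
Cauchy product identifies it with `exp (L_y) φ₁(R_y - L_y)`, where `φ₁(ω) = (e^ω - 1) / ω`.
At `y = -x` the factor `exp (L_{-x})` cancels against `exp x`, leaving `φ₁(ad x)`.
-/

open NormedSpace ContinuousLinearMap Finset
open scoped Nat

/-- Both sides are `((T + P) ^ (n + 1) - P ^ (n + 1)) / T`. -/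
theorem Commute.sum_add_pow_mul_pow {α : Type*} [Ring α] {P T : α} (h : Commute P T) (n : ℕ) :
    ∑ i ∈ range (n + 1), (T + P) ^ i * P ^ (n - i) =
      ∑ k ∈ range (n + 1), T ^ k * P ^ (n - k) * ((n + 1).choose (k + 1) : α) := by
  induction n with
  | zero => simp
  | succ n ih =>
    have hsplit : ∀ k ∈ range (n + 2), T ^ k * P ^ (n + 1 - k) * ((n + 2).choose (k + 1) : α) =
        T ^ k * P ^ (n + 1 - k) * ((n + 1).choose k : α) +
          T ^ k * P ^ (n + 1 - k) * ((n + 1).choose (k + 1) : α) := by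
      intro k _
      rw [Nat.choose_succ_succ, Nat.cast_add, mul_add]
    have hshift : ∀ k ∈ range (n + 1), T ^ k * P ^ (n + 1 - k) * ((n + 1).choose (k + 1) : α) =
        P * (T ^ k * P ^ (n - k) * ((n + 1).choose (k + 1) : α)) := by
      intro k hk
      rw [Nat.sub_add_comm (Nat.lt_succ_iff.mp (mem_range.mp hk)), pow_succ', ← mul_assoc,
        ← (h.pow_right k).eq, mul_assoc, mul_assoc, mul_assoc]
    rw [(h.symm.add_left (Commute.refl P)).geom_sum₂_succ_eq, Nat.add_sub_cancel, ih,
      sum_congr rfl hsplit, sum_add_distrib, ← h.symm.add_pow, sum_range_succ _ (n + 1),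
      Nat.choose_succ_self, Nat.cast_zero, mul_zero, add_zero, sum_congr rfl hshift, mul_sum]

theorem inv_factorial_mul_inv_factorial {k n : ℕ} (hk : k ≤ n) :
    ((n - k)! : ℝ)⁻¹ * ((k + 1)! : ℝ)⁻¹ = ((n + 1)! : ℝ)⁻¹ * (n + 1).choose (k + 1) := by
  have h := Nat.choose_mul_factorial_mul_factorial (Nat.add_le_add_right hk 1)
  have hC : ((n + 1).choose (k + 1) : ℝ) ≠ 0 := by
    exact_mod_cast (Nat.choose_pos (Nat.add_le_add_right hk 1)).ne'
  rw [Nat.add_sub_add_right] at h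
  rw [← h]
  push_cast
  field_simp

section Series

variable {B : Type*} [NormedRing B] [NormedAlgebra ℝ B]

/-- `φ₁(x) = (exp x - 1) / x`, the function `F` of (4.13). -/
noncomputable def phiOne [CompleteSpace B] (x : B) : B := ∑' n : ℕ, ((n + 1)! : ℝ)⁻¹ • x ^ n

/-- For commuting `x` and `y`, the divided difference `(exp y - exp x) / (y - x)`. -/
noncomputable def expDivDiff [CompleteSpace B] (x y : B) : B :=
  ∑' n : ℕ, ((n + 1)! : ℝ)⁻¹ • ∑ i ∈ range (n + 1), y ^ i * x ^ (n - i)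

theorem summable_norm_phiOne_series (x : B) :
    Summable fun n : ℕ => ‖((n + 1)! : ℝ)⁻¹ • x ^ n‖ := by
  refine (norm_expSeries_summable' (𝕂 := ℝ) x).of_nonneg_of_le (fun _ => norm_nonneg _)
    fun n => ?_
  rw [norm_smul, norm_smul]
  gcongr
  rw [norm_inv, norm_inv, RCLike.norm_natCast, RCLike.norm_natCast]
  gcongr
  exact n.le_succ

theorem exp_mul_phiOne_eq_expDivDiff [CompleteSpace B] {P T : B} (h : Commute P T) :
    exp P * phiOne T = expDivDiff P (T + P) := by
  rw [exp_eq_tsum ℝ, phiOne, tsum_mul_tsum_eq_tsum_sum_antidiagonal_of_summable_norm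
    (norm_expSeries_summable' P) (summable_norm_phiOne_series T), expDivDiff]
  refine tsum_congr fun n => ?_
  rw [← Finset.Nat.sum_antidiagonal_swap]
  simp only [Prod.fst_swap, Prod.snd_swap]
  rw [Finset.Nat.sum_antidiagonal_eq_sum_range_succ
    (fun i j => ((j ! : ℝ)⁻¹ • P ^ j) * (((i + 1)! : ℝ)⁻¹ • T ^ i)), h.sum_add_pow_mul_pow,
    smul_sum]
  refine sum_congr rfl fun k hk => ?_
  rw [smul_mul_smul_comm, ← (h.pow_pow _ _).eq, inv_factorial_mul_inv_factorial
    (Nat.lt_succ_iff.mp (mem_range.mp hk)), mul_smul, Nat.cast_smul_eq_nsmul, nsmul_eq_mul']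

end Series

section Operators

variable {E : Type*} [NormedAddCommGroup E] [NormedSpace ℝ E]

theorem opNorm_pow_le (f : E →L[ℝ] E) : ∀ n : ℕ, ‖f ^ n‖ ≤ ‖f‖ ^ n
  | 0 => by rw [pow_zero, pow_zero]; exact norm_id_le
  | n + 1 => norm_pow_le' f n.succ_pos

theorem norm_geom_sum₂_le {f g : E →L[ℝ] E} {r : ℝ} (hf : ‖f‖ ≤ r) (hg : ‖g‖ ≤ r) (n : ℕ) :
    ‖∑ i ∈ range n, g ^ i * f ^ (n - 1 - i)‖ ≤ n * r ^ (n - 1) := by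
  have hr : 0 ≤ r := (norm_nonneg f).trans hf
  calc ‖∑ i ∈ range n, g ^ i * f ^ (n - 1 - i)‖
      ≤ ∑ i ∈ range n, ‖g‖ ^ i * ‖f‖ ^ (n - 1 - i) := by
        refine (norm_sum_le _ _).trans (sum_le_sum fun i _ => ?_)
        exact (norm_mul_le _ _).trans (mul_le_mul (opNorm_pow_le g i) (opNorm_pow_le f _)
          (norm_nonneg _) (by positivity))
    _ ≤ ∑ i ∈ range n, r ^ (n - 1) := by
        refine sum_le_sum fun i hi => ?_
        calc ‖g‖ ^ i * ‖f‖ ^ (n - 1 - i) ≤ r ^ i * r ^ (n - 1 - i) := by gcongr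
          _ = r ^ (n - 1) := by
            rw [← pow_add, Nat.add_sub_cancel' (Nat.le_sub_one_of_lt (mem_range.mp hi))]
    _ = n * r ^ (n - 1) := by rw [sum_const, card_range, nsmul_eq_mul]

theorem summable_norm_apply {F : Type*} [NormedAddCommGroup F] [NormedSpace ℝ F]
    {f : ℕ → E →L[ℝ] F} (hf : Summable fun n => ‖f n‖) (w : E) : Summable fun n => ‖f n w‖ :=
  (hf.mul_right ‖w‖).of_nonneg_of_le (fun _ => norm_nonneg _) fun n => (f n).le_opNorm w

theorem tsum_apply_of_summable_norm {F : Type*} [NormedAddCommGroup F] [NormedSpace ℝ F]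
    [CompleteSpace F] {f : ℕ → E →L[ℝ] F} (hf : Summable fun n => ‖f n‖) (w : E) :
    (∑' n, f n) w = ∑' n, f n w :=
  ((hf.of_norm.hasSum.mapL (apply ℝ F w)).tsum_eq).symm

variable [CompleteSpace E]

theorem exp_apply_eq_tsum (f : E →L[ℝ] E) (w : E) :
    exp f w = ∑' n : ℕ, (n ! : ℝ)⁻¹ • (f ^ n) w := by
  rw [exp_eq_tsum ℝ, tsum_apply_of_summable_norm (norm_expSeries_summable' f)]
  rfl

theorem phiOne_apply_eq_tsum (f : E →L[ℝ] E) (w : E) :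
    phiOne f w = ∑' n : ℕ, ((n + 1)! : ℝ)⁻¹ • (f ^ n) w := by
  rw [phiOne, tsum_apply_of_summable_norm (summable_norm_phiOne_series f)]
  rfl

end Operators

/-- `exp_add_of_commute` needs a `NormedAlgebra ℚ` instance, which `A →L[ℝ] A` lacks. -/
theorem exp_add_of_commute' {B : Type*} [NormedRing B] [NormedAlgebra ℝ B] [CompleteSpace B]
    {x y : B} (h : Commute x y) : exp (x + y) = exp x * exp y :=
  exp_add_of_commute_of_mem_ball (𝕂 := ℝ) h (by simp [expSeries_radius_eq_top])
    (by simp [expSeries_radius_eq_top])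

theorem map_exp_of_map_pow {B C : Type*} [NormedRing B] [NormedAlgebra ℝ B] [CompleteSpace B]
    [NormedRing C] [NormedAlgebra ℝ C] [CompleteSpace C] (f : B →L[ℝ] C) {x : B}
    (hf : ∀ n : ℕ, f (x ^ n) = f x ^ n) : f (exp x) = exp (f x) := by
  simp only [exp_eq_tsum ℝ, f.map_tsum (expSeries_summable' x), map_smul, hf]

section MulOperators

variable {A : Type*} [NormedRing A] [NormedAlgebra ℝ A]

local notation "L" => ContinuousLinearMap.mul ℝ A
local notation "R" => ContinuousLinearMap.flip (ContinuousLinearMap.mul ℝ A)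

theorem mul_pow_eq (x : A) (n : ℕ) : L (x ^ n) = L x ^ n := by
  ext w
  rw [FunLike.coe_pow_eq_iterate]
  exact (congrFun (mul_left_iterate x n) w).symm

theorem flip_mul_pow_eq (x : A) (n : ℕ) : R (x ^ n) = R x ^ n := by
  ext w
  rw [FunLike.coe_pow_eq_iterate]
  exact (congrFun (mul_right_iterate x n) w).symm

theorem commute_mul_flip_mul (x y : A) : Commute (L x) (R y) := by
  ext w
  simp [mul_assoc]

theorem opNorm_flip_mul_apply_le (x : A) : ‖R x‖ ≤ ‖x‖ :=
  ((mul ℝ A).flip.le_opNorm x).trans <| by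
    simpa [opNorm_flip] using mul_le_mul_of_nonneg_right (opNorm_mul_le ℝ A) (norm_nonneg x)

noncomputable def ad (x : A) : A →L[ℝ] A := L x - R x

theorem coe_ad_pow (x : A) (n : ℕ) : ⇑(ad x ^ n) = (fun w => x * w - w * x)^[n] :=
  FunLike.coe_pow_eq_iterate _ _

variable [CompleteSpace A]

theorem exp_ad_apply (x a : A) : exp (ad x) a = exp x * a * exp (-x) := by
  rw [ad, sub_eq_add_neg, ← map_neg, exp_add_of_commute' (commute_mul_flip_mul x (-x)),
    ← map_exp_of_map_pow _ (mul_pow_eq x), ← map_exp_of_map_pow _ (flip_mul_pow_eq (-x))]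
  simp [mul_assoc]

theorem hasFDerivAt_exp_expDivDiff (y : A) :
    HasFDerivAt exp (expDivDiff (L y) (R y)) y := by
  set r := ‖y‖ + 1
  set f' : ℕ → A → (A →L[ℝ] A) :=
    fun n z => (n ! : ℝ)⁻¹ • ∑ i ∈ range n, R z ^ i * L z ^ (n - 1 - i) with hf'
  have hderiv : ∀ n z, HasFDerivAt (fun z : A => (n ! : ℝ)⁻¹ • z ^ n) (f' n z) z := by
    intro n z
    refine ((hasFDerivAt_pow' (𝕜 := ℝ) (x := z) n).const_smul ((n ! : ℝ)⁻¹)).congr_fderiv ?_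
    congr 1
    refine sum_congr rfl fun i _ => ?_
    ext w
    simp [← mul_pow_eq, ← flip_mul_pow_eq, mul_assoc]
  have hbound : ∀ n, ∀ z ∈ Metric.ball (0 : A) r,
      ‖f' n z‖ ≤ (n ! : ℝ)⁻¹ * (n * r ^ (n - 1)) := by
    intro n z hz
    have hz' : ‖z‖ ≤ r := (mem_ball_zero_iff.mp hz).le
    rw [norm_smul, norm_inv, RCLike.norm_natCast]
    gcongr
    exact norm_geom_sum₂_le ((opNorm_mul_apply_le ℝ A z).trans hz')
      ((opNorm_flip_mul_apply_le z).trans hz') n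
  have hsummable : Summable fun n : ℕ => (n ! : ℝ)⁻¹ * (n * r ^ (n - 1)) := by
    refine (summable_nat_add_iff 1).mp ((Real.summable_pow_div_factorial r).congr fun n => ?_)
    rw [Nat.factorial_succ]
    push_cast
    field_simp
  have hy : y ∈ Metric.ball (0 : A) r := by simp [r]
  have h := hasFDerivAt_tsum_of_isPreconnected hsummable Metric.isOpen_ball
    (convex_ball 0 r).isPreconnected (fun n z _ => hderiv n z) hbound hy
    (expSeries_summable' y) hy
  rw [← exp_eq_tsum ℝ] at h
  have hs : Summable fun n => f' n y := .of_norm_bounded hsummable fun n => hbound n y hy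
  have hD : ∑' n, f' n y = expDivDiff (L y) (R y) := by
    rw [hs.tsum_eq_zero_add, hf']
    simp [expDivDiff]
  rwa [hD] at h

theorem exp_mul_expDivDiff_neg_apply (x w : A) :
    exp x * expDivDiff (L (-x)) (R (-x)) w = phiOne (ad x) w := by
  have hcomm : Commute (L (-x)) (ad x) := by
    rw [map_neg]
    exact ((Commute.refl _).sub_right (commute_mul_flip_mul x x)).neg_left
  have hR : R (-x) = ad x + L (-x) := by rw [ad, map_neg, map_neg]; abel
  have hinv : exp (L x) * exp (L (-x)) = 1 := by
    rw [← exp_add_of_commute' (by rw [map_neg]; exact (Commute.refl _).neg_right), ← map_add,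
      add_neg_cancel, map_zero, exp_zero]
  rw [hR, ← exp_mul_phiOne_eq_expDivDiff hcomm]
  calc exp x * (exp (L (-x)) * phiOne (ad x)) w
      = (exp (L x) * exp (L (-x)) * phiOne (ad x)) w := by
        rw [← map_exp_of_map_pow _ (mul_pow_eq x), mul_assoc]
        rfl
    _ = phiOne (ad x) w := by rw [hinv, one_mul]

theorem hasDerivAt_exp_neg_comp {γ : ℝ → A} {v : A} {t : ℝ} (h : HasDerivAt γ v t) :
    HasDerivAt (fun s => exp (-γ s)) (expDivDiff (L (-γ t)) (R (-γ t)) (-v)) t :=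
  (hasFDerivAt_exp_expDivDiff (-γ t)).comp_hasDerivAt t h.neg

end MulOperators

theorem stmt5_general (A : Type*) [NormedRing A] [NormedAlgebra ℝ A] [CompleteSpace A]
    (a : A) (γ γ' : ℝ → A)
    (hγ : ∀ t : ℝ, HasDerivAt γ (γ' t) t) :
    (∀ t : ℝ, DifferentiableAt ℝ (fun s : ℝ => NormedSpace.exp (-γ s)) t) ∧
    (∀ t : ℝ, Summable fun n : ℕ =>
      ‖(n.factorial : ℝ)⁻¹ • (fun x : A => γ t * x - x * γ t)^[n] a‖) ∧
    (∀ t : ℝ, Summable fun n : ℕ =>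
      ‖((n + 1).factorial : ℝ)⁻¹ • (fun x : A => γ t * x - x * γ t)^[n] (γ' t)‖) ∧
    (∀ t : ℝ,
      NormedSpace.exp (γ t) * a * NormedSpace.exp (-γ t) +
        NormedSpace.exp (γ t) * deriv (fun s : ℝ => NormedSpace.exp (-γ s)) t =
      (∑' n : ℕ, (n.factorial : ℝ)⁻¹ • (fun x : A => γ t * x - x * γ t)^[n] a) -
      (∑' n : ℕ, ((n + 1).factorial : ℝ)⁻¹ •
        (fun x : A => γ t * x - x * γ t)^[n] (γ' t))) := by
  simp only [← coe_ad_pow]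
  refine ⟨fun t => (hasDerivAt_exp_neg_comp (hγ t)).differentiableAt,
    fun t => by simpa using summable_norm_apply (norm_expSeries_summable' (𝕂 := ℝ) (ad (γ t))) a,
    fun t => by simpa using summable_norm_apply (summable_norm_phiOne_series (ad (γ t))) (γ' t),
    fun t => ?_⟩
  rw [(hasDerivAt_exp_neg_comp (hγ t)).deriv, ← exp_ad_apply, exp_mul_expDivDiff_neg_apply,
    map_neg, exp_apply_eq_tsum, phiOne_apply_eq_tsum, sub_eq_add_neg]

/-- for a C¹ curve `γ : ℝ → A` in a unital Banach algebra and `a ∈ A`,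
`t ↦ exp(−γ(t))` is differentiable and
`exp(γ(t))·a·exp(−γ(t)) + exp(γ(t))·(d/dt)exp(−γ(t))
  = Σ_{n≥0} (ad_{γ(t)})ⁿ(a)/n! − Σ_{n≥0} (ad_{γ(t)})ⁿ(γ′(t))/(n+1)!`,
with both series converging absolutely in norm. -/
theorem stmt5 (A : Type*) [NormedRing A] [NormedAlgebra ℝ A] [CompleteSpace A]
    (a : A) (γ γ' : ℝ → A)
    (hγ : ∀ t : ℝ, HasDerivAt γ (γ' t) t) (hγ' : Continuous γ') :
    (∀ t : ℝ, DifferentiableAt ℝ (fun s : ℝ => NormedSpace.exp (-γ s)) t) ∧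
    (∀ t : ℝ, Summable fun n : ℕ =>
      ‖(n.factorial : ℝ)⁻¹ • (fun x : A => γ t * x - x * γ t)^[n] a‖) ∧
    (∀ t : ℝ, Summable fun n : ℕ =>
      ‖((n + 1).factorial : ℝ)⁻¹ • (fun x : A => γ t * x - x * γ t)^[n] (γ' t)‖) ∧
    (∀ t : ℝ,
      NormedSpace.exp (γ t) * a * NormedSpace.exp (-γ t) +
        NormedSpace.exp (γ t) * deriv (fun s : ℝ => NormedSpace.exp (-γ s)) t =
      (∑' n : ℕ, (n.factorial : ℝ)⁻¹ • (fun x : A => γ t * x - x * γ t)^[n] a) -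
      (∑' n : ℕ, ((n + 1).factorial : ℝ)⁻¹ •
        (fun x : A => γ t * x - x * γ t)^[n] (γ' t))) :=
  stmt5_general A a γ γ' hγ
end

section
/- Let A be a unital Banach algebra, D : A → A a bounded derivation (a bounded linear map with D(x·y) = D(x)·y + x·D(y)), and b ∈ A. Let R_b : A → A be right multiplication, R_b(x) := x·b, and set W_t := exp(t(D + R_b))(1), the exponential of the bounded operator t(D + R_b) applied to the unit 1. Then t ↦ W_t is differentiable, W_0 = 1, and dW_t/dt = exp(tD)(b)·W_t for every t ∈ ℝ. -/
/-!
The operator `L = D + R_b` satisfies the twisted Leibniz rule `L (x * y) = D x * y + x * L y`,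
and exponentiating it gives `exp (t L) (x * y) = exp (t D) x * exp (t L) y`: both sides solve
`f' = L f` with `f 0 = x * y`. Hence `dW_t/dt = L (exp (t L) 1) = exp (t L) (L 1) = exp (t L) (b * 1)
= exp (t D) b * W_t`, using `D 1 = 0`.
-/

open NormedSpace Set

section LinearODE

variable {E : Type*} [NormedAddCommGroup E] [NormedSpace ℝ E]

theorem exp_smul_apply_comm (L : E →L[ℝ] E) (t : ℝ) (v : E) :
    L (exp (t • L) v) = exp (t • L) (L v) :=
  congrArg (· v) ((Commute.refl L).smul_right t).exp_right.eq

variable [CompleteSpace E]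

theorem hasDerivAt_exp_smul_apply (L : E →L[ℝ] E) (v : E) (t : ℝ) :
    HasDerivAt (fun s : ℝ => exp (s • L) v) (L (exp (t • L) v)) t := by
  simpa using (hasDerivAt_exp_smul_const' L t).clm_apply (hasDerivAt_const t v)

theorem eq_exp_smul_apply_of_hasDerivAt {L : E →L[ℝ] E} {f : ℝ → E}
    (hf : ∀ t, HasDerivAt f (L (f t)) t) : f = fun t => exp (t • L) (f 0) :=
  ODE_solution_unique_univ (v := fun _ => L) (s := fun _ => univ) (t₀ := 0)
    (fun _ => L.lipschitz.lipschitzOnWith) (fun t => ⟨hf t, trivial⟩)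
    (fun t => ⟨hasDerivAt_exp_smul_apply L (f 0) t, trivial⟩) (by simp)

end LinearODE

theorem exp_smul_apply_mul_of_leibniz {A : Type*} [NormedRing A] [NormedAlgebra ℝ A]
    [CompleteSpace A] {D L : A →L[ℝ] A} (hL : ∀ x y, L (x * y) = D x * y + x * L y)
    (t : ℝ) (x y : A) :
    exp (t • L) (x * y) = exp (t • D) x * exp (t • L) y := by
  have hprod : ∀ s, HasDerivAt (fun s => exp (s • D) x * exp (s • L) y)
      (L (exp (s • D) x * exp (s • L) y)) s := fun s => by
    rw [hL]
    exact (hasDerivAt_exp_smul_apply D x s).mul (hasDerivAt_exp_smul_apply L y s)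
  simpa [zero_smul ℝ D, zero_smul ℝ L] using
    (congrFun (eq_exp_smul_apply_of_hasDerivAt hprod) t).symm

/-- with `W_t := exp(t(D+R_b))(1)` for a bounded derivation `D` and right
multiplication `R_b`, the map `t ↦ W_t` is differentiable, `W_0 = 1`, and
`dW_t/dt = exp(tD)(b)·W_t`. -/
theorem stmt8 (A : Type*) [NormedRing A] [NormedAlgebra ℝ A] [CompleteSpace A]
    (D : A →L[ℝ] A) (hD : ∀ x y : A, D (x * y) = D x * y + x * D y)
    (b : A) (Rb : A →L[ℝ] A) (hRb : ∀ x : A, Rb x = x * b)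
    (W : ℝ → A) (hW : ∀ t : ℝ, W t = NormedSpace.exp (t • (D + Rb)) 1) :
    W 0 = 1 ∧
    ∀ t : ℝ, HasDerivAt W (NormedSpace.exp (t • D) b * W t) t := by
  set L := D + Rb
  have hL : ∀ x y, L (x * y) = D x * y + x * L y := fun x y => by
    simp only [L, add_apply, hRb, hD, mul_add, mul_assoc, add_assoc]
  have hD1 : D 1 = 0 := by simpa using hD 1 1
  have hL1 : L 1 = b := by simp [L, hRb, hD1]
  refine ⟨by simp [hW, zero_smul ℝ L], fun t => ?_⟩
  have hLW : L (W t) = exp (t • D) b * W t := by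
    rw [hW, exp_smul_apply_comm, hL1, ← exp_smul_apply_mul_of_leibniz hL, mul_one]
  rw [← hLW, funext hW]
  exact hasDerivAt_exp_smul_apply L 1 t
end
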